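/- arXiv:1103.1445 — 2 statements merged into one kernel-verified Lean document; each statement's English description precedes it below -/
import Mathlib

section
/- There exists a complete simple game on 6 voters that is not weighted: a monotone function χ : {0,1}^6 → {0,1} compatible with the prefix-sum order such that no weights w_1 ≥ … ≥ w_6 ≥ 0 and quota q > 0 represent it. -/
open Finset

/-- The prefix-sum order on Boolean coalition vectors. -/
def PrefLe {n : ℕ} (u v : Fin n → Bool) : Prop :=
  ∀ k : ℕ,
    ∑ i ∈ Finset.univ.filter (fun i : Fin n => (i : ℕ) < k), (if u i then 1 else 0) ≤
    ∑ i ∈ Finset.univ.filter (fun i : Fin n => (i : ℕ) < k), (if v i then (1 : ℕ) else 0)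

/-- A complete simple game for the fixed ordering `1 ⊒ … ⊒ n`. -/
def CompleteSG {n : ℕ} (χ : (Fin n → Bool) → Bool) : Prop :=
  χ (fun _ => false) = false ∧ χ (fun _ => true) = true ∧
    ∀ u v : Fin n → Bool, PrefLe u v → χ u ≤ χ v

/-- Partial (prefix) sum of a Boolean vector. -/
def psum (u : Fin 6 → Bool) (k : ℕ) : ℕ :=
  ∑ i ∈ Finset.univ.filter (fun i : Fin 6 => (i : ℕ) < k), (if u i then 1 else 0)

/-- Bounded (decidable) version of the prefix order. -/
def PLe6 (u v : Fin 6 → Bool) : Bool :=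
  decide (∀ k ∈ Finset.range 7, psum u k ≤ psum v k)

def vA : Fin 6 → Bool := ![false, false, true, true, true, true]
def vB : Fin 6 → Bool := ![true, true, false, false, false, false]
def vC : Fin 6 → Bool := ![false, true, false, false, true, true]
def vD : Fin 6 → Bool := ![true, false, true, true, false, false]

def chi (u : Fin 6 → Bool) : Bool := PLe6 vA u || PLe6 vB u

lemma filter_eq_univ {k : ℕ} (hk : 6 ≤ k) :
    (Finset.univ.filter (fun i : Fin 6 => (i : ℕ) < k)) = Finset.univ := by
  ext i
  simp [lt_of_lt_of_le i.is_lt hk]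

lemma prefLe_of_ple6 {u v : Fin 6 → Bool} (h : PLe6 u v = true) : PrefLe u v := by
  have h' := of_decide_eq_true h
  intro k
  by_cases hk : k < 7
  · exact h' k (Finset.mem_range.mpr hk)
  · push_neg at hk
    have h6 : (6 : ℕ) ≤ k := by omega
    rw [filter_eq_univ h6]
    have := h' 6 (by norm_num)
    simpa [psum, filter_eq_univ (le_refl 6)] using this

lemma ple6_of_prefLe {u v : Fin 6 → Bool} (h : PrefLe u v) : PLe6 u v = true :=
  decide_eq_true (fun k _ => h k)

lemma prefLe_trans {u v w : Fin 6 → Bool} (h1 : PrefLe u v) (h2 : PrefLe v w) :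
    PrefLe u w := fun k => le_trans (h1 k) (h2 k)

lemma prefLe_refl (u : Fin 6 → Bool) : PrefLe u u := fun _ => le_rfl

/-- There exists a complete simple game on `6` voters that is not weighted. -/
theorem stmt_11 :
    ∃ χ : (Fin 6 → Bool) → Bool, CompleteSG χ ∧
      ¬ ∃ (w : Fin 6 → ℝ) (q : ℝ), (∀ i, 0 ≤ w i) ∧
        (∀ i j : Fin 6, i ≤ j → w j ≤ w i) ∧ 0 < q ∧
        ∀ u : Fin 6 → Bool, χ u = true ↔ q ≤ ∑ i, (if u i then w i else 0) := by
  refine ⟨chi, ⟨?_, ?_, ?_⟩, ?_⟩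
  · decide
  · decide
  · intro u v huv
    cases hu : chi u with
    | false => exact Bool.false_le _
    | true =>
      have : chi v = true := by
        unfold chi at hu ⊢
        rcases Bool.or_eq_true_iff.mp hu with h | h
        · exact Bool.or_eq_true_iff.mpr (Or.inl
            (ple6_of_prefLe (prefLe_trans (prefLe_of_ple6 h) huv)))
        · exact Bool.or_eq_true_iff.mpr (Or.inr
            (ple6_of_prefLe (prefLe_trans (prefLe_of_ple6 h) huv)))
      simp [this]
  · rintro ⟨w, q, _, _, hq, hrep⟩
    have hA : chi vA = true := by
      unfold chi
      exact Bool.or_eq_true_iff.mpr (Or.inl (ple6_of_prefLe (prefLe_refl vA)))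
    have hB : chi vB = true := by
      unfold chi
      exact Bool.or_eq_true_iff.mpr (Or.inr (ple6_of_prefLe (prefLe_refl vB)))
    have hC : chi vC = false := by decide
    have hD : chi vD = false := by decide
    have hAq : q ≤ ∑ i, (if vA i then w i else 0) := (hrep vA).mp hA
    have hBq : q ≤ ∑ i, (if vB i then w i else 0) := (hrep vB).mp hB
    have hCq : ¬ q ≤ ∑ i, (if vC i then w i else 0) := by
      intro h; have := (hrep vC).mpr h; rw [hC] at this; exact Bool.false_ne_true this
    have hDq : ¬ q ≤ ∑ i, (if vD i then w i else 0) := by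
      intro h; have := (hrep vD).mpr h; rw [hD] at this; exact Bool.false_ne_true this
    push_neg at hCq hDq
    have hsum : (∑ i, (if vA i then w i else 0)) + (∑ i, (if vB i then w i else 0)) =
        (∑ i, (if vC i then w i else 0)) + (∑ i, (if vD i then w i else 0)) := by
      rw [← Finset.sum_add_distrib, ← Finset.sum_add_distrib]
      apply Finset.sum_congr rfl
      intro i _
      have h : (vA i).toNat + (vB i).toNat = (vC i).toNat + (vD i).toNat := by
        revert i; decide
      cases ha : vA i <;> cases hb : vB i <;> cases hc : vC i <;> cases hd : vD i <;>
        simp only [ha, hb, hc, hd, Bool.toNat_true, Bool.toNat_false,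
          if_true, if_false] at h ⊢ <;>
        first | omega | ring
    linarith
end

section
/- A complete simple game with minimal winning coalitions W and maximal losing coalitions L is weighted if and only if the linear system ∑_i u_i w_i ≥ q for all u ∈ W, ∑_i v_i w_i ≤ q − 1 for all v ∈ L, w_1 ≥ w_2 ≥ … ≥ w_n ≥ 0, q ≥ 0 has a rational solution; moreover any real solution can be scaled to an integer solution. -/
open Finset

/-- The set of ⪯-minimal winning coalitions of `χ`. -/
def MinWinning {n : ℕ} (χ : (Fin n → Bool) → Bool) : Set (Fin n → Bool) :=
  {u | χ u = true ∧ ∀ v, PrefLe v u → v ≠ u → χ v = false}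

/-- The set of ⪯-maximal losing coalitions of `χ`. -/
def MaxLosing {n : ℕ} (χ : (Fin n → Bool) → Bool) : Set (Fin n → Bool) :=
  {v | χ v = false ∧ ∀ u, PrefLe v u → u ≠ v → χ u = true}

/-- The linear system `∑ u_i w_i ≥ q` for all `u ∈ W`,
`∑ v_i w_i ≤ q - 1` for all `v ∈ L`, `w_1 ≥ … ≥ w_n ≥ 0`, `q ≥ 0`. -/
def SystemSol {n : ℕ} {R : Type*} [Field R] [LinearOrder R] [IsStrictOrderedRing R]
    (χ : (Fin n → Bool) → Bool) (w : Fin n → R) (q : R) : Prop :=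
  (∀ u ∈ MinWinning χ, q ≤ ∑ i, (if u i then w i else 0)) ∧
  (∀ v ∈ MaxLosing χ, ∑ i, (if v i then w i else 0) ≤ q - 1) ∧
  (∀ i j : Fin n, i ≤ j → w j ≤ w i) ∧ (∀ i, 0 ≤ w i) ∧ 0 ≤ q

/-- `χ` is a weighted voting game. -/
def IsWeighted {n : ℕ} (χ : (Fin n → Bool) → Bool) : Prop :=
  ∃ (w : Fin n → ℝ) (q : ℝ), (∀ i, 0 ≤ w i) ∧
    (∀ i j : Fin n, i ≤ j → w j ≤ w i) ∧ 0 < q ∧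
    ∀ u : Fin n → Bool, χ u = true ↔ q ≤ ∑ i, (if u i then w i else 0)


/-!
For antitone nonnegative weights, summation by parts writes the weight of a coalition as a
nonnegative combination of its prefix counts, so coalition weight is monotone for the prefix order.
That order is a partial order on a finite set, so every winning coalition lies above a minimal
winning one and every losing coalition below a maximal losing one; hence a solution of the system
decides every coalition, i.e. it is a weighted representation. Conversely, rescaling a weighted
representation by the least gap `q - w(v)` over losing coalitions `v` solves the system, and
multiplying a solution by `n + 2`, then rounding the weights up and the quota down, keeps every
inequality, since rounding moves the weight of a coalition by at most `n`.
-/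

variable {n : ℕ}

def Fin.extendByZero {M : Type*} [Zero M] (f : Fin n → M) (i : ℕ) : M :=
  if h : i < n then f ⟨i, h⟩ else 0

@[simp] lemma Fin.extendByZero_val {M : Type*} [Zero M] (f : Fin n → M) (i : Fin n) :
    Fin.extendByZero f i = f i := by
  simp [Fin.extendByZero]

lemma Fin.extendByZero_nonneg {R : Type*} [Zero R] [Preorder R] {w : Fin n → R}
    (hw0 : ∀ i, 0 ≤ w i) (i : ℕ) : 0 ≤ Fin.extendByZero w i := by
  unfold Fin.extendByZero
  split_ifs
  exacts [hw0 _, le_rfl]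

lemma Fin.antitone_extendByZero {R : Type*} [Zero R] [Preorder R] {w : Fin n → R}
    (hw : Antitone w) (hw0 : ∀ i, 0 ≤ w i) : Antitone (Fin.extendByZero w) := by
  intro i j hij
  unfold Fin.extendByZero
  split_ifs with hj hi hi
  · exact hw (Fin.mk_le_mk.2 hij)
  · omega
  · exact hw0 _
  · exact le_rfl

lemma Fin.sum_filter_val_lt {M : Type*} [AddCommMonoid M] (f : Fin n → M) (k : ℕ) :
    ∑ i ∈ univ.filter (fun i : Fin n => (i : ℕ) < k), f i =
      ∑ i ∈ range k, Fin.extendByZero f i := by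
  calc ∑ i ∈ univ.filter (fun i : Fin n => (i : ℕ) < k), f i
      = ∑ i : Fin n, if (i : ℕ) < k then Fin.extendByZero f i else 0 := by simp [sum_filter]
    _ = ∑ i ∈ (range n).filter (· < k), Fin.extendByZero f i := by
      rw [Fin.sum_univ_eq_sum_range (fun i => if i < k then Fin.extendByZero f i else 0),
        sum_filter]
    _ = ∑ i ∈ range k, Fin.extendByZero f i := by
      refine sum_subset (fun i => by simp) fun i hk hn => ?_
      simp_all [Fin.extendByZero]

def prefixCount (u : Fin n → Bool) (k : ℕ) : ℕ :=
  ∑ i ∈ univ.filter (fun i : Fin n => (i : ℕ) < k), if u i then 1 else 0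

lemma PrefLe.refl (u : Fin n → Bool) : PrefLe u u := fun _ => le_rfl

lemma PrefLe.trans {u v x : Fin n → Bool} (huv : PrefLe u v) (hvx : PrefLe v x) : PrefLe u x :=
  fun k => (huv k).trans (hvx k)

lemma prefixCount_succ (u : Fin n → Bool) (i : Fin n) :
    prefixCount u (i + 1) = prefixCount u i + if u i then 1 else 0 := by
  rw [prefixCount, prefixCount, Fin.sum_filter_val_lt, Fin.sum_filter_val_lt, sum_range_succ,
    Fin.extendByZero_val]

lemma eq_of_prefixCount_eq {u v : Fin n → Bool}
    (h : ∀ k ≤ n, prefixCount u k = prefixCount v k) : u = v := by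
  funext i
  have hu := prefixCount_succ u i
  have hv := prefixCount_succ v i
  rw [h i i.is_le', h (i + 1) i.isLt, hv, add_right_inj] at hu
  revert hu
  cases u i <;> cases v i <;> simp

def prefixMass (u : Fin n → Bool) : ℕ := ∑ k ∈ range (n + 1), prefixCount u k

lemma prefixMass_lt {u v : Fin n → Bool} (h : PrefLe u v) (hne : u ≠ v) :
    prefixMass u < prefixMass v := by
  refine sum_lt_sum (fun k _ => h k) ?_
  by_contra! hge
  exact hne (eq_of_prefixCount_eq fun k hk => (h k).antisymm (hge k (by simpa [Nat.lt_succ_iff])))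

variable {χ : (Fin n → Bool) → Bool}

lemma exists_minWinning_prefLe {u : Fin n → Bool} (hu : χ u = true) :
    ∃ m ∈ MinWinning χ, PrefLe m u := by
  classical
  obtain ⟨m, hm, hmin⟩ := (univ.filter fun v => χ v = true ∧ PrefLe v u).exists_min_image
    prefixMass ⟨u, by simp [hu, PrefLe.refl]⟩
  simp only [mem_filter, mem_univ, true_and] at hm hmin
  refine ⟨m, ⟨hm.1, fun v hvm hne => ?_⟩, hm.2⟩
  by_contra hv
  exact (prefixMass_lt hvm hne).not_ge (hmin v ⟨by simpa using hv, hvm.trans hm.2⟩)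

lemma exists_maxLosing_prefLe {u : Fin n → Bool} (hu : χ u = false) :
    ∃ m ∈ MaxLosing χ, PrefLe u m := by
  classical
  obtain ⟨m, hm, hmax⟩ := (univ.filter fun v => χ v = false ∧ PrefLe u v).exists_max_image
    prefixMass ⟨u, by simp [hu, PrefLe.refl]⟩
  simp only [mem_filter, mem_univ, true_and] at hm hmax
  refine ⟨m, ⟨hm.1, fun v hmv hne => ?_⟩, hm.2⟩
  by_contra hv
  exact (prefixMass_lt hmv hne.symm).not_ge (hmax v ⟨by simpa using hv, hm.2.trans hmv⟩)

section Weight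

variable {R : Type*}

def coalitionWeight [AddCommMonoid R] (w : Fin n → R) (u : Fin n → Bool) : R :=
  ∑ i, if u i then w i else 0

lemma coalitionWeight_mono [AddCommMonoid R] [PartialOrder R] [IsOrderedAddMonoid R]
    {w w' : Fin n → R} (h : ∀ i, w i ≤ w' i) (u : Fin n → Bool) :
    coalitionWeight w u ≤ coalitionWeight w' u :=
  sum_le_sum fun i _ => by split <;> simp [h i]

lemma coalitionWeight_const_mul [Semiring R] (c : R) (w : Fin n → R) (u : Fin n → Bool) :
    coalitionWeight (fun i => c * w i) u = c * coalitionWeight w u := by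
  simp [coalitionWeight, mul_sum]

lemma coalitionWeight_add_one_le [Semiring R] [PartialOrder R] [IsOrderedRing R]
    (w : Fin n → R) (u : Fin n → Bool) :
    coalitionWeight (fun i => w i + 1) u ≤ coalitionWeight w u + n := by
  calc coalitionWeight (fun i => w i + 1) u ≤ ∑ i, ((if u i then w i else 0) + 1) :=
        sum_le_sum fun i _ => by split <;> simp
    _ = coalitionWeight w u + n := by simp [coalitionWeight, sum_add_distrib]

lemma coalitionWeight_ratCast [DivisionRing R] [CharZero R] (w : Fin n → ℚ)
    (u : Fin n → Bool) :
    coalitionWeight (fun i => (w i : R)) u = coalitionWeight w u := by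
  simp [coalitionWeight, apply_ite (Rat.cast : ℚ → R)]

lemma coalitionWeight_eq_sum_range [Semiring R] (w : Fin n → R) (u : Fin n → Bool) :
    coalitionWeight w u =
      ∑ i ∈ range n,
        Fin.extendByZero w i • Fin.extendByZero (fun j => if u j then 1 else 0) i := by
  rw [coalitionWeight, ← Fin.sum_univ_eq_sum_range]
  simp

lemma sum_range_extendByZero_indicator [Semiring R] (u : Fin n → Bool) (k : ℕ) :
    ∑ i ∈ range k, Fin.extendByZero (fun j => if u j then (1 : R) else 0) i =
      prefixCount u k := by
  rw [← Fin.sum_filter_val_lt, prefixCount]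
  push_cast
  rfl

lemma coalitionWeight_eq_sub_sum_prefixCount [Ring R] (w : Fin n → R) (u : Fin n → Bool) :
    coalitionWeight w u = Fin.extendByZero w (n - 1) * prefixCount u n -
      ∑ i ∈ range (n - 1),
        (Fin.extendByZero w (i + 1) - Fin.extendByZero w i) * prefixCount u (i + 1) := by
  rw [coalitionWeight_eq_sum_range, sum_range_by_parts]
  simp only [sum_range_extendByZero_indicator, smul_eq_mul]

lemma coalitionWeight_le_of_prefLe [Ring R] [PartialOrder R] [IsOrderedRing R] {w : Fin n → R}
    (hw : Antitone w) (hw0 : ∀ i, 0 ≤ w i) {u v : Fin n → Bool} (h : PrefLe u v) :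
    coalitionWeight w u ≤ coalitionWeight w v := by
  have hext := Fin.antitone_extendByZero hw hw0
  rw [coalitionWeight_eq_sub_sum_prefixCount, coalitionWeight_eq_sub_sum_prefixCount]
  apply sub_le_sub
  · exact mul_le_mul_of_nonneg_left (Nat.mono_cast (h n)) (Fin.extendByZero_nonneg hw0 _)
  · exact sum_le_sum fun i _ =>
      mul_le_mul_of_nonpos_left (Nat.mono_cast (h (i + 1))) (sub_nonpos.2 (hext i.le_succ))

end Weight

section Field

variable {R : Type*} [Field R] [LinearOrder R] [IsStrictOrderedRing R] {w : Fin n → R} {q : R}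

lemma SystemSol.winning_iff (hs : SystemSol χ w q) (u : Fin n → Bool) :
    χ u = true ↔ q ≤ coalitionWeight w u := by
  obtain ⟨hW, hL, hw, hw0, -⟩ := hs
  constructor
  · intro hu
    obtain ⟨m, hm, hmu⟩ := exists_minWinning_prefLe hu
    exact (hW m hm).trans (coalitionWeight_le_of_prefLe hw hw0 hmu)
  · intro hqu
    by_contra hu
    obtain ⟨m, hm, hum⟩ := exists_maxLosing_prefLe (eq_false_of_ne_true hu)
    have := (coalitionWeight_le_of_prefLe hw hw0 hum).trans (hL m hm)
    linarith

lemma SystemSol.exists_int [FloorRing R] (hs : SystemSol χ w q) :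
    ∃ (w' : Fin n → ℤ) (q' : ℤ), SystemSol χ (fun i => (w' i : R)) (q' : R) := by
  obtain ⟨hW, hL, hw, hw0, hq0⟩ := hs
  set M : R := n + 2
  have hM : 0 ≤ M := by positivity
  refine ⟨fun i => ⌈M * w i⌉, ⌊M * q⌋, fun u hu => ?_, fun v hv => ?_, fun i j hij => ?_,
    fun i => ?_, ?_⟩
  · calc (⌊M * q⌋ : R) ≤ M * q := Int.floor_le _
      _ ≤ M * coalitionWeight w u := by gcongr; exact hW u hu
      _ = coalitionWeight (fun i => M * w i) u := (coalitionWeight_const_mul ..).symm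
      _ ≤ coalitionWeight (fun i => (⌈M * w i⌉ : R)) u :=
          coalitionWeight_mono (fun i => Int.le_ceil _) u
  · calc coalitionWeight (fun i => (⌈M * w i⌉ : R)) v
        ≤ coalitionWeight (fun i => M * w i + 1) v :=
          coalitionWeight_mono (fun i => (Int.ceil_lt_add_one _).le) v
      _ ≤ M * coalitionWeight w v + n := by
          rw [← coalitionWeight_const_mul]; exact coalitionWeight_add_one_le _ v
      _ ≤ M * (q - 1) + n := by gcongr; exact hL v hv
      _ ≤ ⌊M * q⌋ - 1 := by linarith [Int.lt_floor_add_one (M * q)]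
  · exact Int.cast_mono (Int.ceil_mono (mul_le_mul_of_nonneg_left (hw i j hij) hM))
  · exact Int.cast_nonneg (Int.ceil_nonneg (mul_nonneg hM (hw0 i)))
  · exact Int.cast_nonneg (Int.floor_nonneg.2 (mul_nonneg hM hq0))

lemma systemSol_ratCast_iff {w : Fin n → ℚ} {q : ℚ} :
    SystemSol χ (fun i => (w i : R)) (q : R) ↔ SystemSol χ w q := by
  simp only [SystemSol, ← coalitionWeight.eq_1, coalitionWeight_ratCast]
  norm_cast

end Field

lemma SystemSol.isWeighted (h0 : χ (fun _ => false) = false) {w : Fin n → ℝ} {q : ℝ}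
    (hs : SystemSol χ w q) : IsWeighted χ := by
  have hq : 0 < q := by simpa [h0, coalitionWeight] using hs.winning_iff fun _ => false
  exact ⟨w, q, hs.2.2.2.1, hs.2.2.1, hq, hs.winning_iff⟩

lemma IsWeighted.exists_systemSol (h : IsWeighted χ) :
    ∃ (w : Fin n → ℝ) (q : ℝ), SystemSol χ w q := by
  classical
  obtain ⟨w, q, hw0, hw, hq, hχ⟩ := h
  have hlose : ∀ v, χ v = false ↔ coalitionWeight w v < q := fun v => by
    rw [← Bool.not_eq_true, hχ v, not_le]; rfl
  obtain ⟨v₀, hv₀, hgap⟩ := (univ.filter fun v => χ v = false).exists_min_image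
    (fun v => q - coalitionWeight w v) ⟨fun _ => false, by simp [hlose, coalitionWeight, hq]⟩
  simp only [mem_filter, mem_univ, true_and] at hv₀ hgap
  set g := q - coalitionWeight w v₀
  have hg : 0 < g := sub_pos.2 ((hlose v₀).1 hv₀)
  have hg' : 0 ≤ g⁻¹ := inv_nonneg.2 hg.le
  refine ⟨fun i => g⁻¹ * w i, g⁻¹ * q, fun u hu => ?_, fun v hv => ?_, fun i j hij => ?_,
    fun i => mul_nonneg hg' (hw0 i), mul_nonneg hg' hq.le⟩
  · show g⁻¹ * q ≤ coalitionWeight (fun i => g⁻¹ * w i) u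
    rw [coalitionWeight_const_mul]
    exact mul_le_mul_of_nonneg_left ((hχ u).1 hu.1) hg'
  · show coalitionWeight (fun i => g⁻¹ * w i) v ≤ g⁻¹ * q - 1
    rw [coalitionWeight_const_mul]
    calc g⁻¹ * coalitionWeight w v ≤ g⁻¹ * (q - g) := by gcongr; linarith [hgap v hv.1]
      _ = g⁻¹ * q - 1 := by field_simp
  · exact mul_le_mul_of_nonneg_left (hw i j hij) hg'

/-- A complete simple game is weighted iff the finite linear system built from
its minimal winning and maximal losing coalitions has a rational solution;
moreover any real solution can be scaled to an integer solution. -/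
theorem stmt_12 (n : ℕ) (χ : (Fin n → Bool) → Bool) (hχ : CompleteSG χ) :
    (IsWeighted χ ↔ ∃ (w : Fin n → ℚ) (q : ℚ), SystemSol χ w q) ∧
    (∀ (w : Fin n → ℝ) (q : ℝ), SystemSol χ w q →
      ∃ (w' : Fin n → ℤ) (q' : ℤ),
        SystemSol χ (fun i => (w' i : ℝ)) (q' : ℝ)) := by
  refine ⟨⟨fun hw => ?_, fun ⟨w, q, hs⟩ => (systemSol_ratCast_iff.2 hs).isWeighted hχ.1⟩,
    fun w q hs => hs.exists_int⟩
  obtain ⟨w, q, hs⟩ := hw.exists_systemSol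
  obtain ⟨w', q', hs'⟩ := hs.exists_int
  exact ⟨fun i => w' i, q', systemSol_ratCast_iff.1 (by simpa using hs')⟩
end
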